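/- arXiv:2111.13748 — 2 statements merged into one kernel-verified Lean document; each statement's English description precedes it below -/
import Mathlib

section
/- Let H_r be the core gadget at scale r for a parameter ε ∈ (0,1) with 1/ε an odd integer and k = (1/ε+1)/2. Then: (1) every short edge of H_r has weight 2r·sin(ε^{3/2}/2), every long edge has weight 2r·sin(k·ε^{3/2}/2), and the terminal edge has weight 2r·sin(√ε/2); (2) the minimum spanning tree of H_r has total weight at most r·√ε; and (3) for all sufficiently small ε, the total edge weight of H_r is at least r/(6√ε). -/
open scoped ENNReal

namespace LightSpanners

/-- The total weight of a walk: the sum of the weights of its edges. -/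
def walkWeight {V : Type*} {G : SimpleGraph V} (w : Sym2 V → ℝ) {u v : V} (p : G.Walk u v) : ℝ :=
  (p.edges.map w).sum

/-- Weighted shortest-path distance (`∞` if there is no path). -/
noncomputable def wdist {V : Type*} (G : SimpleGraph V) (w : Sym2 V → ℝ) (u v : V) : ℝ≥0∞ :=
  ⨅ p : G.Walk u v, ENNReal.ofReal (walkWeight w p)

/-- Total edge weight of a graph. -/
noncomputable def gweight {V : Type*} (G : SimpleGraph V) (w : Sym2 V → ℝ) : ℝ :=
  ∑ᶠ e ∈ G.edgeSet, w e

/-- All edges have positive weight. -/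
def PosWeights {V : Type*} (G : SimpleGraph V) (w : Sym2 V → ℝ) : Prop :=
  ∀ e ∈ G.edgeSet, 0 < w e

/-- Weight of a minimum spanning tree of `G`: the infimum of the total weights of
spanning trees of `G`. -/
noncomputable def mstWeight {V : Type*} (G : SimpleGraph V) (w : Sym2 V → ℝ) : ℝ :=
  sInf {x : ℝ | ∃ T : SimpleGraph V, T ≤ G ∧ T.IsTree ∧ gweight T w = x}

/-- `H` is a `t`-spanner of `G` (with edge weights `w`). -/
def IsSpanner {V : Type*} (G H : SimpleGraph V) (w : Sym2 V → ℝ) (t : ℝ) : Prop :=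
  H ≤ G ∧ ∀ u v : V, wdist H w u v ≤ ENNReal.ofReal t * wdist G w u v

/-- `G` contains the complete graph on `r` vertices as a minor
(branch-set characterization). -/
def HasCompleteMinor {V : Type*} (G : SimpleGraph V) (r : ℕ) : Prop :=
  ∃ B : Fin r → Set V,
    (∀ i, (B i).Nonempty) ∧
    (∀ i, (G.induce (B i)).Connected) ∧
    (∀ i j, i ≠ j → Disjoint (B i) (B j)) ∧
    (∀ i j, i ≠ j → ∃ u ∈ B i, ∃ v ∈ B j, G.Adj u v)

/-- Euclidean/metric weights on the pairs of a set of points. -/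
noncomputable def distW {E : Type*} [PseudoMetricSpace E] (s : Set E) : Sym2 s → ℝ :=
  Sym2.lift ⟨fun a b => dist (a : E) (b : E), fun a b => dist_comm _ _⟩

/-- The breakpoints of the core gadget at scale `r`:  the `a`-th breakpoint is the point
of the circle of radius `r` centered at the origin with angle `a·ε^{3/2}` (so consecutive
breakpoints subtend an angle `ε^{3/2}`). -/
noncomputable def gadgetPt (r ε : ℝ) (a : ℕ) : ℂ :=
  (r : ℂ) * Complex.exp ((((a : ℝ) * ε ^ ((3 : ℝ) / 2) : ℝ) : ℂ) * Complex.I)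

/-- The (abstract) core gadget graph on the `2k` breakpoints `0, 1, …, 2k−1`:
the short edges `(i, i+1)` for `0 ≤ i ≤ 2k−2`, the long edges `(i, i+k)` for
`0 ≤ i ≤ k−1`, and the terminal edge `(0, 2k−1)`. -/
def coreGadget (k : ℕ) : SimpleGraph (Fin (2 * k)) :=
  SimpleGraph.fromRel (fun i j =>
    (j : ℕ) = (i : ℕ) + 1 ∨ (j : ℕ) = (i : ℕ) + k ∨
      ((i : ℕ) = 0 ∧ (j : ℕ) = 2 * k - 1))

/-- The edge weights of the core gadget at scale `r`: Euclidean distances between the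
corresponding breakpoints. -/
noncomputable def gadgetW (r ε : ℝ) {k : ℕ} : Sym2 (Fin (2 * k)) → ℝ :=
  Sym2.lift ⟨fun i j => dist (gadgetPt r ε (i : ℕ)) (gadgetPt r ε (j : ℕ)),
    fun i j => dist_comm _ _⟩

/-! The `a`-th breakpoint sits at angle `a θ`, `θ = ε^{3/2}`, on the circle of radius `r`, so the
chord between breakpoints `a` and `b` has length `2r |sin((a - b) θ / 2)|`. All breakpoints lie
within the angle `(2k - 1) θ = √ε ≤ 1`, so no absolute values are needed on the gadget's edges.
The short edges form a spanning path of weight `(2k - 1) · 2r sin(θ/2) ≤ (2k - 1) r θ = r √ε`.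
Each of the `k` long edges subtends `k θ ≤ √ε`, and `sin x ≥ (23/24) x` for `x ≤ 1/2`; since
`k ε ≥ 1/2`, the long edges alone weigh at least `(23/24) k² r θ ≥ (23/16) r / (6 √ε)`. -/

open SimpleGraph

lemma finsum_mem_le_finsum_mem_of_subset {α : Type*} {s t : Set α} {f : α → ℝ}
    (hst : s ⊆ t) (ht : t.Finite) (hf : ∀ x ∈ t \ s, 0 ≤ f x) :
    ∑ᶠ x ∈ s, f x ≤ ∑ᶠ x ∈ t, f x := by
  rw [← finsum_mem_add_sdiff hst ht, le_add_iff_nonneg_right]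
  exact finsum_nonneg fun x => finsum_nonneg fun hx => hf x hx

section WeightedGraph

variable {V ι : Type*} {G T : SimpleGraph V} {w : Sym2 V → ℝ}

lemma gweight_nonneg_of_le (hTG : T ≤ G) (hw : ∀ e ∈ G.edgeSet, 0 ≤ w e) :
    0 ≤ gweight T w :=
  finsum_nonneg fun e => finsum_nonneg fun he => hw e (edgeSet_mono hTG he)

lemma mstWeight_le_gweight (hw : ∀ e ∈ G.edgeSet, 0 ≤ w e) (hTG : T ≤ G) (hT : T.IsTree) :
    mstWeight G w ≤ gweight T w :=
  csInf_le ⟨0, by rintro _ ⟨T', hT'G, -, rfl⟩; exact gweight_nonneg_of_le hT'G hw⟩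
    ⟨T, hTG, hT, rfl⟩

lemma gweight_eq_sum_of_edgeSet_eq_range [Fintype ι] {f : ι → Sym2 V}
    (hf : Function.Injective f) (hG : G.edgeSet = Set.range f) :
    gweight G w = ∑ i, w (f i) := by
  rw [gweight, hG, finsum_mem_range hf, finsum_eq_sum_of_fintype]

lemma sum_le_gweight_of_injective [Finite V] [Fintype ι] {f : ι → Sym2 V}
    (hf : Function.Injective f) (hfG : ∀ i, f i ∈ G.edgeSet)
    (hw : ∀ e ∈ G.edgeSet, 0 ≤ w e) :
    ∑ i, w (f i) ≤ gweight G w := by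
  rw [← finsum_eq_sum_of_fintype, ← finsum_mem_range hf]
  exact finsum_mem_le_finsum_mem_of_subset (Set.range_subset_iff.2 hfG) (Set.toFinite _)
    fun e he => hw e he.1

end WeightedGraph

lemma pathGraph_edgeSet (m : ℕ) :
    (pathGraph (m + 1)).edgeSet = Set.range fun i : Fin m => s(i.castSucc, i.succ) := by
  ext e
  induction e using Sym2.ind with
  | _ u v =>
    simp only [mem_edgeSet, pathGraph_adj, Set.mem_range, Sym2.eq_iff, Fin.ext_iff,
      Fin.val_castSucc, Fin.val_succ]
    constructor
    · rintro (h | h)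
      · exact ⟨⟨u, by omega⟩, Or.inl ⟨rfl, h⟩⟩
      · exact ⟨⟨v, by omega⟩, Or.inr ⟨rfl, h⟩⟩
    · rintro ⟨i, ⟨hu, hv⟩ | ⟨hv, hu⟩⟩ <;> omega

lemma injective_castSucc_succ_edge (m : ℕ) :
    Function.Injective fun i : Fin m => s(i.castSucc, i.succ) := by
  intro i j h
  simp only [Sym2.eq_iff, Fin.ext_iff, Fin.val_castSucc, Fin.val_succ] at h
  omega

lemma isTree_pathGraph (m : ℕ) : (pathGraph (m + 1)).IsTree := by
  rw [isTree_iff_connected_and_card, pathGraph_edgeSet,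
    Nat.card_range_of_injective (injective_castSucc_succ_edge m)]
  exact ⟨pathGraph_connected m, by simp⟩

lemma gweight_pathGraph (m : ℕ) (w : Sym2 (Fin (m + 1)) → ℝ) :
    gweight (pathGraph (m + 1)) w = ∑ i : Fin m, w s(i.castSucc, i.succ) :=
  gweight_eq_sum_of_edgeSet_eq_range (injective_castSucc_succ_edge m) (pathGraph_edgeSet m)

lemma mstWeight_le_of_pathGraph_le {n : ℕ} (hn : 0 < n) {G : SimpleGraph (Fin n)}
    {w : Sym2 (Fin n) → ℝ} (hG : pathGraph n ≤ G) (hw : ∀ e ∈ G.edgeSet, 0 ≤ w e) {c : ℝ}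
    (hc : ∀ i j : Fin n, (j : ℕ) = i + 1 → w s(i, j) ≤ c) :
    mstWeight G w ≤ ((n : ℝ) - 1) * c := by
  obtain ⟨m, rfl⟩ := Nat.exists_eq_add_one_of_ne_zero hn.ne'
  calc mstWeight G w ≤ gweight (pathGraph (m + 1)) w :=
        mstWeight_le_gweight hw hG (isTree_pathGraph m)
    _ = ∑ i : Fin m, w s(i.castSucc, i.succ) := gweight_pathGraph m w
    _ ≤ ∑ _i : Fin m, c := Finset.sum_le_sum fun i _ => hc _ _ (by simp)
    _ = ((m + 1 : ℕ) - 1 : ℝ) * c := by simp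

lemma dist_ofReal_mul_exp_mul_I (r x y : ℝ) :
    dist ((r : ℂ) * Complex.exp (x * Complex.I)) ((r : ℂ) * Complex.exp (y * Complex.I)) =
      2 * |r| * |Real.sin ((x - y) / 2)| := by
  have hfactor : (r : ℂ) * Complex.exp (x * Complex.I) - (r : ℂ) * Complex.exp (y * Complex.I) =
      r * Complex.exp (y * Complex.I) * (Complex.exp (Complex.I * ↑(x - y)) - 1) := by
    rw [mul_sub, mul_one, mul_assoc, ← Complex.exp_add]
    push_cast
    ring_nf
  rw [Complex.dist_eq, hfactor, norm_mul, norm_mul, Complex.norm_exp_ofReal_mul_I,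
    Complex.norm_exp_I_mul_ofReal_sub_one, Complex.norm_real, norm_mul, Real.norm_eq_abs,
    Real.norm_eq_abs]
  norm_num
  ring

lemma rpow_three_halves {x : ℝ} (hx : 0 ≤ x) : x ^ ((3 : ℝ) / 2) = √x ^ 3 := by
  rw [Real.sqrt_eq_rpow, ← Real.rpow_mul_natCast hx]
  norm_num

section Gadget

variable {r ε : ℝ} {k : ℕ}

lemma gadgetW_mk (i j : Fin (2 * k)) :
    gadgetW r ε s(i, j) = 2 * |r| * |Real.sin (((i : ℝ) - j) * ε ^ ((3 : ℝ) / 2) / 2)| := by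
  change dist (gadgetPt r ε i) (gadgetPt r ε j) = _
  rw [gadgetPt, gadgetPt, dist_ofReal_mul_exp_mul_I, sub_mul]

lemma gadgetW_nonneg (e : Sym2 (Fin (2 * k))) : 0 ≤ gadgetW r ε e := by
  induction e using Sym2.ind with
  | _ i j => rw [gadgetW_mk]; positivity

lemma gadgetW_of_val_eq_add (hr : 0 ≤ r) (hε : 0 ≤ ε) {i j : Fin (2 * k)} {d : ℕ}
    (hd : (j : ℕ) = i + d) (hdπ : d * ε ^ ((3 : ℝ) / 2) ≤ 2 * Real.pi) :
    gadgetW r ε s(i, j) = 2 * r * Real.sin (d * ε ^ ((3 : ℝ) / 2) / 2) := by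
  have hji : (i : ℝ) - j = -d := by rw [hd]; push_cast; ring
  have hsin : 0 ≤ Real.sin (d * ε ^ ((3 : ℝ) / 2) / 2) :=
    Real.sin_nonneg_of_nonneg_of_le_pi (by positivity) (by linarith)
  rw [gadgetW_mk, hji, neg_mul, neg_div, Real.sin_neg, abs_neg, abs_of_nonneg hr,
    abs_of_nonneg hsin]

end Gadget

lemma pathGraph_le_coreGadget (k : ℕ) : pathGraph (2 * k) ≤ coreGadget k := by
  intro u v h
  rw [pathGraph_adj] at h
  rw [coreGadget, fromRel_adj]
  exact ⟨fun huv => by subst huv; omega, by omega⟩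

lemma mul_le_gweight_coreGadget {k : ℕ} {w : Sym2 (Fin (2 * k)) → ℝ}
    (hw : ∀ e ∈ (coreGadget k).edgeSet, 0 ≤ w e) {c : ℝ}
    (hc : ∀ i j : Fin (2 * k), (j : ℕ) = i + k → c ≤ w s(i, j)) :
    k * c ≤ gweight (coreGadget k) w := by
  let longEdge (i : Fin k) : Sym2 (Fin (2 * k)) := s(⟨i, by omega⟩, ⟨i + k, by omega⟩)
  have hinj : Function.Injective longEdge := by
    intro i j h
    simp only [longEdge, Sym2.eq_iff, Fin.ext_iff] at h
    omega
  have hmem (i : Fin k) : longEdge i ∈ (coreGadget k).edgeSet := by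
    rw [mem_edgeSet, coreGadget, fromRel_adj]
    exact ⟨fun h => by simp only [Fin.ext_iff] at h; omega, by simp⟩
  calc (k : ℝ) * c = ∑ _i : Fin k, c := by simp
    _ ≤ ∑ i, w (longEdge i) := Finset.sum_le_sum fun i _ => hc _ _ rfl
    _ ≤ gweight (coreGadget k) w := sum_le_gweight_of_injective hinj hmem hw

section GadgetParameters

variable {ε : ℝ} {k : ℕ}

lemma two_mul_sub_one_mul_rpow (hk : 1 ≤ k) (hkε : (2 * k - 1) * ε = 1) :
    (2 * k - 1) * ε ^ ((3 : ℝ) / 2) = √ε := by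
  have hk' : (1 : ℝ) ≤ k := by exact_mod_cast hk
  have hε : 0 ≤ ε := by nlinarith
  rw [rpow_three_halves hε]
  linear_combination √ε * hkε + (2 * k - 1) * √ε * Real.sq_sqrt hε

lemma nat_mul_rpow_le_two_pi (hk : 1 ≤ k) (hkε : (2 * k - 1) * ε = 1) {d : ℕ}
    (hd : d ≤ 2 * k - 1) : d * ε ^ ((3 : ℝ) / 2) ≤ 2 * Real.pi := by
  have hk' : (1 : ℝ) ≤ k := by exact_mod_cast hk
  have hε : 0 ≤ ε := by nlinarith
  have hd' : (d : ℝ) ≤ 2 * k - 1 := by rify [show 1 ≤ 2 * k by omega] at hd; exact hd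
  have hsqrt : √ε ≤ 1 := Real.sqrt_le_one.2 (by nlinarith)
  nlinarith [Real.pi_gt_three, Real.rpow_nonneg hε ((3 : ℝ) / 2), two_mul_sub_one_mul_rpow hk hkε]

lemma two_mul_sub_one_mul_sin_le {r : ℝ} (hr : 0 ≤ r) (hk : 1 ≤ k)
    (hkε : (2 * k - 1) * ε = 1) :
    (2 * k - 1) * (2 * r * Real.sin (ε ^ ((3 : ℝ) / 2) / 2)) ≤ r * √ε := by
  have hk' : (1 : ℝ) ≤ k := by exact_mod_cast hk
  have hε : 0 ≤ ε := by nlinarith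
  have hsin := Real.sin_le (by positivity : 0 ≤ ε ^ ((3 : ℝ) / 2) / 2)
  calc (2 * k - 1) * (2 * r * Real.sin (ε ^ ((3 : ℝ) / 2) / 2))
      ≤ (2 * k - 1) * (2 * r * (ε ^ ((3 : ℝ) / 2) / 2)) := by gcongr; linarith
    _ = r * √ε := by rw [← two_mul_sub_one_mul_rpow hk hkε]; ring

lemma div_six_sqrt_le_mul_sin {r : ℝ} (hr : 0 ≤ r) (hk : 1 ≤ k) (hkε : (2 * k - 1) * ε = 1) :
    r / (6 * √ε) ≤ k * (2 * r * Real.sin (k * ε ^ ((3 : ℝ) / 2) / 2)) := by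
  have hk' : (1 : ℝ) ≤ k := by exact_mod_cast hk
  have hε : 0 < ε := by nlinarith
  set s := √ε with hs_def
  have hs : 0 < s := Real.sqrt_pos.2 hε
  have hks : (2 * k - 1) * s ^ 2 = 1 := by rw [hs_def, Real.sq_sqrt hε.le]; exact hkε
  have hs1 : s ≤ 1 := by nlinarith
  have hks_half : 1 / 2 ≤ k * s ^ 2 := by nlinarith
  set x := k * ε ^ ((3 : ℝ) / 2) / 2 with hx_def
  have hx : x = k * s ^ 3 / 2 := by rw [hx_def, rpow_three_halves hε.le]
  have hx0 : 0 ≤ x := by rw [hx]; positivity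
  have hx_half : x ≤ 1 / 2 := by
    have : k * s ^ 3 ≤ s := by nlinarith
    rw [hx]; linarith
  have hsin : 23 / 24 * x ≤ Real.sin x := by
    have hx2 : x ^ 2 ≤ 1 / 4 := by nlinarith
    nlinarith [Real.sin_ge_sub_cube hx0, mul_le_mul_of_nonneg_left hx2 hx0]
  have hsq : 1 / 4 ≤ (k * s ^ 2) ^ 2 := by nlinarith
  rw [div_le_iff₀ (by positivity)]
  calc r ≤ 23 / 4 * r * (k * s ^ 2) ^ 2 := by nlinarith [mul_le_mul_of_nonneg_left hsq hr]
    _ = k * (2 * r * (23 / 24 * x)) * (6 * s) := by rw [hx]; ring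
    _ ≤ k * (2 * r * Real.sin x) * (6 * s) := by gcongr

end GadgetParameters

/-- Basic properties of the core gadget `H_r` (here `1/ε = 2k−1` is an
odd integer, i.e. `k = (1/ε+1)/2`):
(1) every short edge has weight `2r·sin(ε^{3/2}/2)`, every long edge has weight
`2r·sin(k·ε^{3/2}/2)`, and the terminal edge has weight `2r·sin(√ε/2)`;
(2) the minimum spanning tree of `H_r` has total weight at most `r·√ε`;
(3) for all sufficiently small `ε`, the total edge weight of `H_r` is at least
`r/(6√ε)`. -/
theorem core_gadget_properties :
    ∃ ε₀ : ℝ, 0 < ε₀ ∧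
      ∀ (ε : ℝ) (k : ℕ), 2 ≤ k → ε = 1 / (2 * (k : ℝ) - 1) →
      ∀ r : ℝ, 0 < r →
        (∀ i j : Fin (2 * k), (j : ℕ) = (i : ℕ) + 1 →
          gadgetW r ε s(i, j) = 2 * r * Real.sin (ε ^ ((3 : ℝ) / 2) / 2)) ∧
        (∀ i j : Fin (2 * k), (j : ℕ) = (i : ℕ) + k →
          gadgetW r ε s(i, j) = 2 * r * Real.sin ((k : ℝ) * ε ^ ((3 : ℝ) / 2) / 2)) ∧
        (∀ i j : Fin (2 * k), (i : ℕ) = 0 → (j : ℕ) = 2 * k - 1 →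
          gadgetW r ε s(i, j) = 2 * r * Real.sin (Real.sqrt ε / 2)) ∧
        mstWeight (coreGadget k) (gadgetW r ε) ≤ r * Real.sqrt ε ∧
        (ε ≤ ε₀ → r / (6 * Real.sqrt ε) ≤ gweight (coreGadget k) (gadgetW r ε)) := by
  refine ⟨1, one_pos, fun ε k hk hε r hr => ?_⟩
  have hk1 : 1 ≤ k := by omega
  have hk' : (2 : ℝ) ≤ k := by exact_mod_cast hk
  have hkε : (2 * k - 1) * ε = 1 := by rw [hε, mul_one_div, div_self (by linarith)]
  have hε0 : 0 ≤ ε := by nlinarith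
  have hedge {i j : Fin (2 * k)} {d : ℕ} (hd : (j : ℕ) = i + d) (hdk : d ≤ 2 * k - 1) :=
    gadgetW_of_val_eq_add hr.le hε0 hd (nat_mul_rpow_le_two_pi hk1 hkε hdk)
  have hshort (i j : Fin (2 * k)) (h : (j : ℕ) = i + 1) :
      gadgetW r ε s(i, j) = 2 * r * Real.sin (ε ^ ((3 : ℝ) / 2) / 2) := by
    simpa using hedge h (by omega)
  have hlong (i j : Fin (2 * k)) (h : (j : ℕ) = i + k) := hedge h (by omega)
  refine ⟨hshort, hlong, fun i j hi hj => ?_, ?_, fun _ => ?_⟩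
  · rw [hedge (d := 2 * k - 1) (by omega) le_rfl, Nat.cast_sub (by omega), Nat.cast_mul,
      Nat.cast_ofNat, Nat.cast_one, two_mul_sub_one_mul_rpow hk1 hkε]
  · refine (mstWeight_le_of_pathGraph_le (by omega) (pathGraph_le_coreGadget k)
      (fun e _ => gadgetW_nonneg e) fun i j h => (hshort i j h).le).trans ?_
    exact_mod_cast two_mul_sub_one_mul_sin_le hr.le hk1 hkε
  · exact (div_six_sqrt_le_mul_sin hr.le hk1 hkε).trans
      (mul_le_gweight_coreGadget (fun e _ => gadgetW_nonneg e) fun i j h => (hlong i j h).ge)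

end LightSpanners
end

section
/- If a finite metric space (X,d_X) is (t,η)-decomposable, then it admits a general sparse spanner oracle of stretch O(t) with weak sparsity O(t·log|X| / η). Concretely, for each subset T ⊆ X and each L > 0, taking O(1/η · log|T|) independent samples from a (t,2L,η)-decomposition and, in each sampled partition, connecting all points of T in a common cluster by a star, yields (with constant success probability) a graph S with at most O((|T|·log|T|)/η) edges, each of weight at most 4tL, in which every pair x ≠ y ∈ T with L ≤ d_X(x,y) < 2L satisfies d_S(x,y) ≤ O(t)·d_X(x,y). -/
/-
The sampling is derandomized by averaging: for any finite set `Q` of pairs at distance at most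
`2L`, some partition in the support of a `(t, 2L, η)`-decomposition keeps at least `η |Q|` of them
together. Choosing such partitions greedily covers all pairs of `T` after `k` rounds with
`k η ≤ η + log |T|² ≤ 4 log |T|`. In each chosen partition join every point of `T` to a fixed
representative of its cluster: edges have length at most `2tL`, there are at most `k |T|` of them,
and two points of a common cluster are joined by a path of length at most `4tL ≤ 4t d(x, y)`.
-/

open scoped ENNReal

namespace LightSpanners

/-- Metric weights on the pairs of points of a metric space. -/
noncomputable def metricW {X : Type*} [PseudoMetricSpace X] : Sym2 X → ℝ :=
  Sym2.lift ⟨fun a b => dist a b, fun a b => dist_comm a b⟩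

/-- `D` is a `(t,Δ,η)`-decomposition of the metric space `X`:  a distribution over
partitions of `X` (encoded as equivalence relations) such that every partition in the
support is `t·Δ`-bounded, and every two points at distance at most `Δ` lie in a common
cluster with probability at least `η`. -/
def IsDecomposition {X : Type*} [MetricSpace X] (t Δ η : ℝ)
    (D : PMF (Setoid X)) : Prop :=
  (∀ P ∈ D.support, ∀ x y : X, P.r x y → dist x y ≤ t * Δ) ∧
  (∀ x y : X, x ≠ y → dist x y ≤ Δ →
    ENNReal.ofReal η ≤ D.toOuterMeasure {P : Setoid X | P.r x y})

section WeightedGraph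

variable {V : Type*} {G : SimpleGraph V} (w : Sym2 V → ℝ)

lemma walkWeight_append {u v x : V} (p : G.Walk u v) (q : G.Walk v x) :
    walkWeight w (p.append q) = walkWeight w p + walkWeight w q := by
  simp [walkWeight, SimpleGraph.Walk.edges_append]

lemma wdist_le_walkWeight {u v : V} (p : G.Walk u v) :
    wdist G w u v ≤ ENNReal.ofReal (walkWeight w p) :=
  iInf_le _ p

lemma wdist_triangle (u m v : V) : wdist G w u v ≤ wdist G w u m + wdist G w m v :=
  ENNReal.le_iInf_add_iInf fun p q => by
    grw [wdist_le_walkWeight w (p.append q), walkWeight_append, ENNReal.ofReal_add_le]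

lemma wdist_comm (u v : V) : wdist G w u v = wdist G w v u := by
  suffices ∀ u v : V, wdist G w v u ≤ wdist G w u v from le_antisymm (this v u) (this u v)
  refine fun u v => le_iInf fun p => (wdist_le_walkWeight w p.reverse).trans_eq ?_
  simp [walkWeight, SimpleGraph.Walk.edges_reverse, List.map_reverse, List.sum_reverse]

lemma wdist_le_of_adj {u v : V} (h : G.Adj u v) : wdist G w u v ≤ ENNReal.ofReal (w s(u, v)) := by
  simpa [walkWeight] using wdist_le_walkWeight w (SimpleGraph.Walk.cons h .nil)

lemma wdist_fromEdgeSet_le {E : Set (Sym2 V)} {u v : V} (h : s(u, v) ∈ E) :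
    wdist (SimpleGraph.fromEdgeSet E) w u v ≤ ENNReal.ofReal (w s(u, v)) := by
  obtain rfl | huv := eq_or_ne u v
  · exact (wdist_le_walkWeight w .nil).trans (by simp [walkWeight])
  · exact wdist_le_of_adj w ((SimpleGraph.fromEdgeSet_adj E).mpr ⟨h, huv⟩)

lemma gweight_le_ncard_mul [Finite V] (G : SimpleGraph V) {B : ℝ}
    (hB : ∀ e ∈ G.edgeSet, w e ≤ B) : gweight G w ≤ G.edgeSet.ncard * B := by
  have hfin := G.edgeSet.toFinite
  rw [gweight, finsum_mem_eq_finite_toFinset_sum w hfin, Set.ncard_eq_toFinset_card _ hfin,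
    ← nsmul_eq_mul]
  exact Finset.sum_le_card_nsmul _ _ _ fun e he => hB e (hfin.mem_toFinset.mp he)

end WeightedGraph

section StarGraph

variable {X : Type*}

noncomputable def clusterCenter (P : Setoid X) (x : X) : X :=
  (Quotient.mk P x).out

lemma rel_clusterCenter (P : Setoid X) (x : X) : P.r x (clusterCenter P x) :=
  Quotient.exact (Quotient.out_eq _).symm

lemma clusterCenter_eq_of_rel {P : Setoid X} {x y : X} (h : P.r x y) :
    clusterCenter P x = clusterCenter P y := by
  rw [clusterCenter, Quotient.sound h, clusterCenter]

-- The centers need not lie in `T`, so this is a graph on all of `X`.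
def starGraph (Ps : Finset (Setoid X)) (T : Set X) : SimpleGraph X :=
  SimpleGraph.fromEdgeSet
    ((fun p : Setoid X × X => s(p.2, clusterCenter p.1 p.2)) '' (↑Ps ×ˢ T))

lemma edgeSet_starGraph_subset {Ps : Finset (Setoid X)} {T : Set X} :
    (starGraph Ps T).edgeSet ⊆
      (fun p : Setoid X × X => s(p.2, clusterCenter p.1 p.2)) '' (↑Ps ×ˢ T) := by
  rw [starGraph, SimpleGraph.edgeSet_fromEdgeSet]
  exact Set.sdiff_subset

lemma ncard_edgeSet_starGraph_le [Finite X] (Ps : Finset (Setoid X)) (T : Set X) :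
    (starGraph Ps T).edgeSet.ncard ≤ Ps.card * T.ncard :=
  calc (starGraph Ps T).edgeSet.ncard
      ≤ ((fun p : Setoid X × X => s(p.2, clusterCenter p.1 p.2)) '' (↑Ps ×ˢ T)).ncard :=
        Set.ncard_le_ncard edgeSet_starGraph_subset (Set.toFinite _)
    _ ≤ (↑Ps ×ˢ T : Set (Setoid X × X)).ncard :=
        Set.ncard_image_le (Ps.finite_toSet.prod T.toFinite)
    _ = Ps.card * T.ncard := by rw [Set.ncard_prod, Set.ncard_coe_finset]

variable [PseudoMetricSpace X] {Ps : Finset (Setoid X)} {T : Set X} {B : ℝ}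

lemma metricW_le_of_mem_edgeSet_starGraph
    (hB : ∀ P ∈ Ps, ∀ x y : X, P.r x y → dist x y ≤ B) :
    ∀ e ∈ (starGraph Ps T).edgeSet, metricW e ≤ B := by
  intro e he
  obtain ⟨⟨P, x⟩, ⟨hP, -⟩, rfl⟩ := edgeSet_starGraph_subset he
  exact hB P hP x _ (rel_clusterCenter P x)

lemma wdist_starGraph_clusterCenter_le {P : Setoid X} (hP : P ∈ Ps) {z : X} (hz : z ∈ T) :
    wdist (starGraph Ps T) metricW z (clusterCenter P z) ≤
      ENNReal.ofReal (dist z (clusterCenter P z)) :=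
  wdist_fromEdgeSet_le metricW <| Set.mem_image_of_mem
    (fun p : Setoid X × X => s(p.2, clusterCenter p.1 p.2)) (Set.mk_mem_prod hP hz)

lemma wdist_starGraph_le {P : Setoid X} (hP : P ∈ Ps)
    (hB : ∀ x y : X, P.r x y → dist x y ≤ B) {x y : X} (hx : x ∈ T) (hy : y ∈ T) (hxy : P.r x y) :
    wdist (starGraph Ps T) metricW x y ≤ ENNReal.ofReal (2 * B) := by
  have hedge : ∀ z ∈ T, wdist (starGraph Ps T) metricW z (clusterCenter P z) ≤
      ENNReal.ofReal B := fun z hz =>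
    (wdist_starGraph_clusterCenter_le hP hz).trans
      (ENNReal.ofReal_le_ofReal (hB z _ (rel_clusterCenter P z)))
  have hB0 : 0 ≤ B := dist_nonneg.trans (hB x _ (rel_clusterCenter P x))
  calc wdist (starGraph Ps T) metricW x y
      ≤ wdist (starGraph Ps T) metricW x (clusterCenter P x)
        + wdist (starGraph Ps T) metricW (clusterCenter P y) y := by
        rw [clusterCenter_eq_of_rel hxy]; exact wdist_triangle _ _ _ _
    _ ≤ ENNReal.ofReal B + ENNReal.ofReal B := by
        rw [wdist_comm _ (clusterCenter P y)]; gcongr <;> exact hedge _ ‹_›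
    _ = ENNReal.ofReal (2 * B) := by rw [two_mul, ENNReal.ofReal_add hB0 hB0]

end StarGraph

lemma log_add_le_log_of_le_one_sub_mul {m n η : ℝ} (hm : 0 < m) (hn : 0 < n)
    (h : m ≤ (1 - η) * n) : Real.log m + η ≤ Real.log n := by
  have hη : 0 < 1 - η := pos_of_mul_pos_left (hm.trans_le h) hn.le
  calc Real.log m + η ≤ Real.log ((1 - η) * n) + η := by gcongr
    _ = Real.log (1 - η) + η + Real.log n := by rw [Real.log_mul hη.ne' hn.ne']; ring
    _ ≤ Real.log n := by linarith [Real.log_le_sub_one_of_pos hη]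

section GreedyCover

variable {α ι : Type*} (D : PMF α) (R : α → ι → Prop) [∀ a, DecidablePred (R a)]

lemma sum_toOuterMeasure_eq_tsum_mul_card_filter (Q : Finset ι) :
    ∑ q ∈ Q, D.toOuterMeasure {a | R a q} = ∑' a, D a * (Q.filter (R a)).card := by
  simp only [PMF.toOuterMeasure_apply]
  rw [← Summable.tsum_finsetSum fun _ _ => ENNReal.summable]
  refine tsum_congr fun a => ?_
  simp only [Set.indicator_apply, Set.mem_ofPred_eq]
  rw [← Finset.sum_filter, Finset.sum_const, nsmul_eq_mul, mul_comm]

lemma exists_mem_support_mul_card_le_card_filter {η : ℝ} (hη : 0 ≤ η) (Q : Finset ι)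
    (hR : ∀ q ∈ Q, ENNReal.ofReal η ≤ D.toOuterMeasure {a | R a q}) :
    ∃ a ∈ D.support, η * Q.card ≤ (Q.filter (R a)).card := by
  by_contra! hlt
  have hmean : ENNReal.ofReal (η * Q.card) ≤ ∑' a, D a * (Q.filter (R a)).card :=
    calc ENNReal.ofReal (η * Q.card) = Q.card • ENNReal.ofReal η := by
          rw [ENNReal.ofReal_mul hη, ENNReal.ofReal_natCast, nsmul_eq_mul, mul_comm]
      _ ≤ ∑ q ∈ Q, D.toOuterMeasure {a | R a q} := Finset.card_nsmul_le_sum _ _ _ hR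
      _ = _ := sum_toOuterMeasure_eq_tsum_mul_card_filter D R Q
  -- the counts are integers below `η |Q|`, so each is at most `⌈η |Q|⌉ - 1`
  set k := ⌈η * Q.card⌉₊
  have hk : ∑' a, D a * ((Q.filter (R a)).card + 1 : ℝ≥0∞) ≤ k :=
    calc ∑' a, D a * ((Q.filter (R a)).card + 1 : ℝ≥0∞) ≤ ∑' a, D a * k := by
          refine ENNReal.tsum_le_tsum fun a => ?_
          by_cases ha : a ∈ D.support
          · gcongr
            exact_mod_cast Nat.lt_ceil.mpr (hlt a ha)
          · simp [(PMF.mem_support_iff D a).not_left.mp ha]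
      _ = k := by rw [ENNReal.tsum_mul_right, PMF.tsum_coe, one_mul]
  simp only [mul_add, mul_one, ENNReal.tsum_add, PMF.tsum_coe] at hk
  have : ENNReal.ofReal (η * Q.card + 1) ≤ ENNReal.ofReal k := by
    rw [ENNReal.ofReal_add (by positivity) zero_le_one, ENNReal.ofReal_one,
      ENNReal.ofReal_natCast]
    exact (add_le_add_left hmean 1).trans hk
  rw [ENNReal.ofReal_le_ofReal_iff (by positivity)] at this
  linarith [Nat.ceil_lt_add_one (by positivity : 0 ≤ η * Q.card)]

-- Greedy: each round serves an `η`-fraction of the remaining requests, so `log |Q|` drops by `η`.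
lemma exists_finset_cover {η : ℝ} (hη : 0 < η) (Q : Finset ι)
    (hR : ∀ q ∈ Q, ENNReal.ofReal η ≤ D.toOuterMeasure {a | R a q}) :
    ∃ s : Finset α, ↑s ⊆ D.support ∧ (∀ q ∈ Q, ∃ a ∈ s, R a q) ∧
      s.card * η ≤ η + Real.log Q.card := by
  classical
  induction Q using Finset.strongInduction with | H Q ih => ?_
  obtain rfl | hQ := Q.eq_empty_or_nonempty
  · exact ⟨∅, by simp, by simp, by simp [hη.le]⟩
  obtain ⟨a, ha, hcount⟩ := exists_mem_support_mul_card_le_card_filter D R hη.le Q hR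
  set Q' := Q.filter (fun q => ¬ R a q)
  have hsplit : ((Q.filter (R a)).card : ℝ) + Q'.card = Q.card := by
    exact_mod_cast Finset.card_filter_add_card_filter_not _
  obtain hQ' | hQ' := Q'.eq_empty_or_nonempty
  · refine ⟨{a}, by simpa using ha, fun q hq => ⟨a, Finset.mem_singleton_self a, ?_⟩, ?_⟩
    · by_contra hq'
      have : q ∈ Q' := Finset.mem_filter.mpr ⟨hq, hq'⟩
      simp [hQ'] at this
    · have := Real.log_natCast_nonneg Q.card
      simp only [Finset.card_singleton, Nat.cast_one, one_mul]
      linarith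
  have hQ'Q : Q' ⊂ Q := by
    have hpos : 0 < ((Q.filter (R a)).card : ℝ) :=
      lt_of_lt_of_le (by have := hQ.card_pos; positivity) hcount
    obtain ⟨q, hq⟩ := Finset.card_pos.mp (by exact_mod_cast hpos)
    exact Finset.filter_ssubset.mpr
      ⟨q, Finset.mem_of_mem_filter q hq, not_not.mpr (Finset.mem_filter.mp hq).2⟩
  obtain ⟨s, hs, hcover, hcard⟩ := ih Q' hQ'Q fun q hq => hR q (Finset.filter_subset _ _ hq)
  refine ⟨insert a s, ?_, fun q hq => ?_, ?_⟩
  · simpa [Set.insert_subset_iff] using ⟨ha, hs⟩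
  · by_cases hq' : R a q
    · exact ⟨a, Finset.mem_insert_self a s, hq'⟩
    · obtain ⟨b, hb, hbq⟩ := hcover q (Finset.mem_filter.mpr ⟨hq, hq'⟩)
      exact ⟨b, Finset.mem_insert_of_mem hb, hbq⟩
  · have hlog : Real.log Q'.card + η ≤ Real.log Q.card :=
      log_add_le_log_of_le_one_sub_mul (by exact_mod_cast hQ'.card_pos)
        (by exact_mod_cast hQ.card_pos) (by linarith)
    have : ((insert a s).card : ℝ) ≤ s.card + 1 := by exact_mod_cast Finset.card_insert_le a s
    nlinarith

end GreedyCover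

lemma exists_finset_rel_of_isDecomposition {X : Type*} [MetricSpace X] [Finite X]
    {t Δ η : ℝ} {D : PMF (Setoid X)} (hD : IsDecomposition t Δ η D) (hη : 0 < η)
    (hη1 : η ≤ 1) (T : Set X) :
    ∃ s : Finset (Setoid X), ↑s ⊆ D.support ∧
      (∀ x ∈ T, ∀ y ∈ T, x ≠ y → dist x y ≤ Δ → ∃ P ∈ s, P.r x y) ∧
      s.card * η ≤ 4 * Real.log T.ncard := by
  classical
  set Tf := T.toFinite.toFinset
  set Q := (Tf ×ˢ Tf).filter fun q : X × X => q.1 ≠ q.2 ∧ dist q.1 q.2 ≤ Δ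
  have hmemQ : ∀ x ∈ T, ∀ y ∈ T, x ≠ y → dist x y ≤ Δ → (x, y) ∈ Q :=
    fun x hx y hy hxy hd =>
      Finset.mem_filter.mpr ⟨Finset.mem_product.mpr ⟨by simpa [Tf], by simpa [Tf]⟩, hxy, hd⟩
  obtain hQ | ⟨⟨x, y⟩, hxyQ⟩ := Q.eq_empty_or_nonempty
  · refine ⟨∅, by simp, fun x hx y hy hxy hd => ?_, by simp [Real.log_natCast_nonneg]⟩
    simpa [hQ] using hmemQ x hx y hy hxy hd
  obtain ⟨s, hs, hcover, hcard⟩ := exists_finset_cover D (fun P q => P.r q.1 q.2) hη Q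
    fun q hq => hD.2 q.1 q.2 (Finset.mem_filter.mp hq).2.1 (Finset.mem_filter.mp hq).2.2
  refine ⟨s, hs, fun x hx y hy hxy hd => hcover (x, y) (hmemQ x hx y hy hxy hd), ?_⟩
  have hTf : Tf.card = T.ncard := (Set.ncard_eq_toFinset_card T T.toFinite).symm
  have hT2 : (2 : ℝ) ≤ T.ncard := by
    obtain ⟨hxy, -⟩ := (Finset.mem_filter.mp hxyQ).2
    obtain ⟨hx, hy⟩ := Finset.mem_product.mp (Finset.mem_filter.mp hxyQ).1
    exact_mod_cast hTf ▸ Finset.one_lt_card.mpr ⟨x, hx, y, hy, hxy⟩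
  have hQT : (Q.card : ℝ) ≤ T.ncard ^ 2 := by
    rw [← hTf, sq]
    exact_mod_cast (Finset.card_filter_le _ _).trans (Finset.card_product Tf Tf).le
  have hlogQ : Real.log Q.card ≤ 2 * Real.log T.ncard := by
    rw [← Nat.cast_ofNat, ← Real.log_pow]
    exact Real.log_le_log (by exact_mod_cast Finset.card_pos.mpr ⟨_, hxyQ⟩)
      (by exact_mod_cast hQT)
  have hlogT : 1 ≤ 2 * Real.log T.ncard := by
    linarith [Real.log_two_gt_d9, Real.log_le_log two_pos hT2]
  linarith

lemma ncard_mul_log_ncard_le {X : Type*} [Fintype X] (T : Set X) :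
    (T.ncard : ℝ) * Real.log T.ncard ≤ T.ncard * Real.log (Fintype.card X) := by
  obtain hT | hT := T.ncard.eq_zero_or_pos
  · simp [hT]
  gcongr
  exact_mod_cast Nat.card_eq_fintype_card (α := X) ▸ T.ncard_le_card

/-- If a finite metric space (X,d_X) is (t,η)-decomposable, then it
admits a general sparse spanner oracle of stretch O(t) with weak sparsity
O(t·log|X|/η).  Concretely, for each subset T ⊆ X and each L > 0, sampling O(log|T|/η)
partitions from a (t,2L,η)-decomposition and connecting, in each sampled partition, all
points of T lying in a common cluster by a star yields (with constant success
probability) a graph S with at most O((|T|·log|T|)/η) edges, each of weight at most 4tL,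
in which every pair x ≠ y ∈ T with L ≤ d_X(x,y) < 2L satisfies
d_S(x,y) ≤ O(t)·d_X(x,y). -/
theorem decomposable_gsso :
    ∃ c : ℝ, 0 < c ∧
      ∀ (X : Type) [MetricSpace X] [Fintype X],
      ∀ t η : ℝ, 1 ≤ t → 0 < η → η ≤ 1 →
        (∀ Δ : ℝ, 0 < Δ → ∃ D : PMF (Setoid X), IsDecomposition t Δ η D) →
      ∀ (T : Set X) (L : ℝ), 0 < L →
        ∃ S : SimpleGraph X,
          ((S.edgeSet.ncard : ℝ) ≤ c * (T.ncard : ℝ) * Real.log (T.ncard) / η) ∧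
          (∀ e ∈ S.edgeSet, metricW e ≤ 4 * t * L) ∧
          (∀ x ∈ T, ∀ y ∈ T, x ≠ y → L ≤ dist x y → dist x y < 2 * L →
            wdist S metricW x y ≤ ENNReal.ofReal (c * t * dist x y)) ∧
          gweight S metricW ≤
            c * t * Real.log (Fintype.card X) / η * (T.ncard : ℝ) * L := by
  refine ⟨8, by norm_num, fun X _ _ t η ht hη hη1 hdec T L hL => ?_⟩
  obtain ⟨D, hD⟩ := hdec (2 * L) (by positivity)
  obtain ⟨s, hs, hcover, hcard⟩ := exists_finset_rel_of_isDecomposition hD hη hη1 T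
  have hbdd : ∀ P ∈ s, ∀ x y : X, P.r x y → dist x y ≤ t * (2 * L) :=
    fun P hP => hD.1 P (hs hP)
  have hweight := metricW_le_of_mem_edgeSet_starGraph (T := T) hbdd
  have hedges : ((starGraph s T).edgeSet.ncard : ℝ) * η ≤ 4 * T.ncard * Real.log T.ncard :=
    calc _ ≤ ((s.card * T.ncard : ℕ) : ℝ) * η := by
          gcongr; exact ncard_edgeSet_starGraph_le s T
      _ ≤ 4 * T.ncard * Real.log T.ncard := by push_cast; nlinarith
  have hlogT := Real.log_natCast_nonneg T.ncard
  refine ⟨starGraph s T, ?_, fun e he => (hweight e he).trans (by nlinarith), ?_, ?_⟩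
  · rw [le_div_iff₀ hη]; nlinarith [mul_nonneg (Nat.cast_nonneg (α := ℝ) T.ncard) hlogT]
  · intro x hx y hy hxy hLd hd
    obtain ⟨P, hP, hPxy⟩ := hcover x hx y hy hxy hd.le
    exact (wdist_starGraph_le hP (hbdd P hP) hx hy hPxy).trans
      (ENNReal.ofReal_le_ofReal (by nlinarith))
  · rw [div_mul_eq_mul_div, div_mul_eq_mul_div, le_div_iff₀ hη]
    calc gweight (starGraph s T) metricW * η
        ≤ (starGraph s T).edgeSet.ncard * (t * (2 * L)) * η := by
          gcongr
          exact gweight_le_ncard_mul metricW _ hweight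
      _ = (starGraph s T).edgeSet.ncard * η * (2 * t * L) := by ring
      _ ≤ 4 * T.ncard * Real.log T.ncard * (2 * t * L) := by gcongr
      _ = T.ncard * Real.log T.ncard * (8 * t * L) := by ring
      _ ≤ T.ncard * Real.log (Fintype.card X) * (8 * t * L) := 
          mul_le_mul_of_nonneg_right (ncard_mul_log_ncard_le T) (by positivity)
      _ = 8 * t * Real.log (Fintype.card X) * T.ncard * L := by ring

end LightSpanners
end
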